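/- The large-s asymptotics f₃(s) = 4(2s+1)(10s²+10s+1)/35 satisfies f₃(s) ~ (16/7)s³ as s → ∞, and moreover (16/7) = (2/189)·(√6)⁶, matching the coefficient of S³ in the small-S expansion of the scaling function F(S,√6) = 2·6^{3/2}e^{-2√6 S}(1+e^{-2√6 S})/(1-e^{-2√6 S})³. -/

import Mathlib

open Real Filter Asymptotics

open Polynomial in
theorem isEquivalent_cubic_atTop {𝕜 : Type*} [NormedField 𝕜] [LinearOrder 𝕜]
    [IsStrictOrderedRing 𝕜] [OrderTopology 𝕜] {a : 𝕜} (ha : a ≠ 0) (b c d : 𝕜) :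
    (fun x : 𝕜 => a * x ^ 3 + b * x ^ 2 + c * x + d) ~[atTop] fun x => a * x ^ 3 := by
  have h := isEquivalent_atTop_lead (C a * X ^ 3 + C b * X ^ 2 + C c * X + C d)
  rw [leadingCoeff_cubic ha, natDegree_cubic ha] at h
  simpa using h

theorem stmt_7 :
    (fun s : ℝ => 4 * (2 * s + 1) * (10 * s ^ 2 + 10 * s + 1) / 35)
      ~[atTop] (fun s : ℝ => 16 / 7 * s ^ 3) ∧
    (16 / 7 : ℝ) = 2 / 189 * (Real.sqrt 6) ^ 6 := by
  constructor
  · have expand : (fun s : ℝ => 4 * (2 * s + 1) * (10 * s ^ 2 + 10 * s + 1) / 35) =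
        fun s => 16 / 7 * s ^ 3 + 24 / 7 * s ^ 2 + 48 / 35 * s + 4 / 35 := by
      funext s; ring
    rw [expand]
    exact isEquivalent_cubic_atTop (by norm_num) _ _ _
  · rw [show √6 ^ 6 = (√6 ^ 2) ^ 3 by ring, sq_sqrt (by norm_num)]
    norm_num
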